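/- arXiv:1508.00526 — 2 statements merged into one kernel-verified Lean document; each statement's English description precedes it below -/
import Mathlib

section
/- Suppose a group G has a normal subgroup N and quotient H = G/N, where N admits a presentation with r generators and k relations and H admits a presentation with s generators and l relations. Then G admits a presentation with r + s generators and at most k + 2rs + l relations. -/
/-- `X` admits a presentation with `n` generators and at most `m` relations. -/
def HasPresentation (X : Type*) [Group X] (n m : ℕ) : Prop :=
  ∃ rels : Finset (FreeGroup (Fin n)), rels.card ≤ m ∧
    Nonempty (PresentedGroup (rels : Set (FreeGroup (Fin n))) ≃* X)

/-!
Take as generators those of `N` together with lifts `g` of the generators of `G/N`, and as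
relators those of `N`, the conjugation relations `g^{±1} n g^{∓1} = (word in the n's)` and the
lifted relations `W(g) = (word in the n's)`. In the presented group `P` the conjugation relations
make the subgroup generated by the `n`'s normal, so every element of `P` is a `g`-word times
an `n`-word. If such an element dies in `G`, its `g`-word dies in `G/N`, hence is a consequence
of the `W`'s and equals an `n`-word in `P`; the resulting `n`-word dies in `N`, so it is a
consequence of the relators of `N`.
-/

open Subgroup

theorem HasPresentation.of_mulEquiv {X : Type*} [Group X] {α : Type*} {n m : ℕ}
    (e : α ≃ Fin n) {rels : Set (FreeGroup α)} (hfin : rels.Finite) (hcard : rels.ncard ≤ m)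
    (iso : PresentedGroup rels ≃* X) : HasPresentation X n m := by
  have hfin' : (FreeGroup.freeGroupCongr e '' rels).Finite := hfin.image _
  refine ⟨hfin'.toFinset, ?_, ?_⟩
  · rw [← Set.ncard_eq_toFinset_card _ hfin']
    exact (Set.ncard_image_le hfin).trans hcard
  · rw [Set.Finite.coe_toFinset]
    exact ⟨(PresentedGroup.equivPresentedGroup rels e).symm.trans iso⟩

@[simp]
theorem PresentedGroup.toGroup_mk {α G : Type*} [Group G] {f : α → G}
    {rels : Set (FreeGroup α)} (h : ∀ r ∈ rels, FreeGroup.lift f r = 1) (x : FreeGroup α) :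
    PresentedGroup.toGroup h (PresentedGroup.mk rels x) = FreeGroup.lift f x :=
  rfl

theorem PresentedGroup.ker_mulEquiv_comp_mk {α X : Type*} [Group X] {rels : Set (FreeGroup α)}
    (e : PresentedGroup rels ≃* X) :
    ((e : PresentedGroup rels →* X).comp (PresentedGroup.mk rels)).ker = normalClosure rels := by
  ext w
  rw [MonoidHom.ker_mulEquiv_comp, MonoidHom.mem_ker, PresentedGroup.mk_eq_one_iff]

theorem FreeGroup.exists_comp_lift_eq {β G Q : Type*} [Group G] [Group Q] {π : G →* Q}
    (hπ : Function.Surjective π) (η : FreeGroup β →* Q) :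
    ∃ g : β → G, π.comp (FreeGroup.lift g) = η :=
  ⟨fun j => Function.surjInv hπ (η (FreeGroup.of j)),
    FreeGroup.ext_hom _ _ fun j => by simp [Function.surjInv_eq hπ]⟩

-- Both signs are needed: in an infinite group `t K t⁻¹ ≤ K` does not force equality.
theorem Subgroup.closure_normal_of_conj_mem {P : Type*} [Group P] {s T : Set P}
    (hT : closure T = ⊤)
    (hconj : ∀ t ∈ T, ∀ x ∈ s, t * x * t⁻¹ ∈ closure s ∧ t⁻¹ * x * t ∈ closure s) :
    (closure s).Normal := by
  have conj_le : ∀ t : P, (∀ x ∈ s, t * x * t⁻¹ ∈ closure s) →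
      ∀ y ∈ closure s, t * y * t⁻¹ ∈ closure s := fun t ht =>
    (closure_le ((closure s).comap (MulAut.conj t).toMonoidHom)).2 ht
  rw [← normalizer_eq_top_iff, eq_top_iff, ← hT, closure_le]
  intro t ht y
  refine ⟨conj_le t (fun x hx => (hconj t ht x hx).1) y, fun hy => ?_⟩
  simpa [mul_assoc] using conj_le t⁻¹ (by simpa using fun x hx => (hconj t ht x hx).2) _ hy

namespace HallPresentation

variable {G : Type*} [Group G] {α β : Type*}

def generators (ν : FreeGroup α →* G) (g : β → G) : α ⊕ β → G :=
  Sum.elim (fun i => ν (FreeGroup.of i)) g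

def conjugationWords (α β : Type*) : Set (FreeGroup (α ⊕ β)) :=
  Set.range (fun p : α × β =>
      FreeGroup.of (.inr p.2) * FreeGroup.of (.inl p.1) * (FreeGroup.of (.inr p.2))⁻¹) ∪
    Set.range (fun p : α × β =>
      (FreeGroup.of (.inr p.2))⁻¹ * FreeGroup.of (.inl p.1) * FreeGroup.of (.inr p.2))

/-- Besides the relators of `N`, each conjugation word and each lifted relator `t` of `G/N` is
set equal to a word in the generators of `N` with the same value in `G`, chosen by
`Function.invFun ν`: these are Hall's relations `g n g^{±1} = …` and `W(g) = …`. -/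
def relators (R : Set (FreeGroup α)) (S : Set (FreeGroup β)) (ν : FreeGroup α →* G)
    (g : β → G) : Set (FreeGroup (α ⊕ β)) :=
  FreeGroup.map Sum.inl '' R ∪
    (fun t => t *
        (FreeGroup.map Sum.inl (Function.invFun ν (FreeGroup.lift (generators ν g) t)))⁻¹) ''
      (conjugationWords α β ∪ FreeGroup.map Sum.inr '' S)

variable {R : Set (FreeGroup α)} {S : Set (FreeGroup β)} {ν : FreeGroup α →* G} {g : β → G}

@[simp]
theorem lift_generators_map_inl (w : FreeGroup α) :
    FreeGroup.lift (generators ν g) (FreeGroup.map Sum.inl w) = ν w := by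
  induction w using FreeGroup.induction_on <;> simp_all [generators]

@[simp]
theorem lift_generators_map_inr (w : FreeGroup β) :
    FreeGroup.lift (generators ν g) (FreeGroup.map Sum.inr w) = FreeGroup.lift g w := by
  induction w using FreeGroup.induction_on <;> simp_all [generators]

theorem lift_generators_mem {N : Subgroup G} [N.Normal] (hνN : ν.range ≤ N)
    (hgS : S ⊆ ((QuotientGroup.mk' N).comp (FreeGroup.lift g)).ker) {t : FreeGroup (α ⊕ β)}
    (ht : t ∈ conjugationWords α β ∪ FreeGroup.map Sum.inr '' S) :
    FreeGroup.lift (generators ν g) t ∈ N := by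
  have hν : ∀ i, ν (FreeGroup.of i) ∈ N := fun i => hνN ⟨_, rfl⟩
  rcases ht with (⟨⟨i, j⟩, rfl⟩ | ⟨⟨i, j⟩, rfl⟩) | ⟨W, hW, rfl⟩
  · simpa [generators] using Normal.conj_mem ‹_› _ (hν i) (g j)
  · simpa [generators] using Normal.conj_mem' ‹_› _ (hν i) (g j)
  · simpa [QuotientGroup.eq_one_iff] using hgS hW

theorem lift_generators_relators_eq_one {N : Subgroup G} [N.Normal] (hνN : ν.range = N)
    (hνR : R ⊆ ν.ker) (hgS : S ⊆ ((QuotientGroup.mk' N).comp (FreeGroup.lift g)).ker) :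
    ∀ r ∈ relators R S ν g, FreeGroup.lift (generators ν g) r = 1 := by
  rintro _ (⟨r, hr, rfl⟩ | ⟨t, ht, rfl⟩)
  · simpa using hνR hr
  · have hmem := lift_generators_mem hνN.le hgS ht
    rw [← hνN] at hmem
    simp [Function.invFun_eq hmem]

def inlSubgroup (R : Set (FreeGroup α)) (S : Set (FreeGroup β)) (ν : FreeGroup α →* G)
    (g : β → G) : Subgroup (PresentedGroup (relators R S ν g)) :=
  closure (Set.range fun i => PresentedGroup.of (.inl i))

section PresentedGroup

local notation "π" => PresentedGroup.mk (relators R S ν g)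

theorem mk_map_inl_eq_one {w : FreeGroup α} (hw : w ∈ normalClosure R) :
    π (FreeGroup.map Sum.inl w) = 1 :=
  normalClosure_le_normal (N := ((PresentedGroup.mk _).comp (FreeGroup.map Sum.inl)).ker)
    (fun _ hr => PresentedGroup.one_of_mem (Or.inl ⟨_, hr, rfl⟩)) hw

theorem mem_inlSubgroup_iff {x : PresentedGroup (relators R S ν g)} :
    x ∈ inlSubgroup R S ν g ↔ ∃ w, π (FreeGroup.map Sum.inl w) = x := by
  have hlift : FreeGroup.lift (fun i => PresentedGroup.of (.inl i)) =
      (π).comp (FreeGroup.map (Sum.inl : α → α ⊕ β)) :=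
    FreeGroup.ext_hom _ _ fun i => by simp [PresentedGroup.of]
  rw [inlSubgroup, ← FreeGroup.range_lift_eq_closure, hlift]
  rfl

theorem mk_map_inl_mem_inlSubgroup (w : FreeGroup α) :
    π (FreeGroup.map Sum.inl w) ∈ inlSubgroup R S ν g :=
  mem_inlSubgroup_iff.2 ⟨w, rfl⟩

theorem mk_mem_inlSubgroup {t : FreeGroup (α ⊕ β)}
    (ht : t ∈ conjugationWords α β ∪ FreeGroup.map Sum.inr '' S) :
    π t ∈ inlSubgroup R S ν g := by
  rw [PresentedGroup.mk_eq_mk_of_mul_inv_mem (Or.inr ⟨t, ht, rfl⟩)]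
  exact mk_map_inl_mem_inlSubgroup _

theorem normal_inlSubgroup : (inlSubgroup R S ν g).Normal := by
  have hgen (i : α) : PresentedGroup.of (.inl i) ∈ inlSubgroup R S ν g :=
    Subgroup.subset_closure ⟨i, rfl⟩
  refine closure_normal_of_conj_mem (PresentedGroup.closure_range_of _) ?_
  rintro _ ⟨a | j, rfl⟩ _ ⟨i, rfl⟩
  · exact ⟨mul_mem (mul_mem (hgen a) (hgen i)) (inv_mem (hgen a)),
      mul_mem (mul_mem (inv_mem (hgen a)) (hgen i)) (hgen a)⟩
  · exact ⟨mk_mem_inlSubgroup (S := S) (Or.inl (Or.inl ⟨(i, j), rfl⟩)),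
      mk_mem_inlSubgroup (S := S) (Or.inl (Or.inr ⟨(i, j), rfl⟩))⟩

theorem exists_mk_map_inr_mul_mk_map_inl_eq (q : PresentedGroup (relators R S ν g)) :
    ∃ w₁ w₂, π (FreeGroup.map Sum.inr w₁) * π (FreeGroup.map Sum.inl w₂) = q := by
  have := normal_inlSubgroup (R := R) (S := S) (ν := ν) (g := g)
  have hq : q ∈ ((PresentedGroup.mk _).comp (FreeGroup.map Sum.inr)).range ⊔
      inlSubgroup R S ν g :=
    PresentedGroup.generated_by _ _ (fun
      | .inl i => mem_sup_right (Subgroup.subset_closure ⟨i, rfl⟩)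
      | .inr j => mem_sup_left ⟨FreeGroup.of j, by simp [PresentedGroup.of]⟩) q
  obtain ⟨_, ⟨w₁, rfl⟩, m, hm, rfl⟩ := mem_sup_of_normal_right.1 hq
  obtain ⟨w₂, rfl⟩ := mem_inlSubgroup_iff.1 hm
  exact ⟨w₁, w₂, rfl⟩

theorem mk_map_inr_mem_inlSubgroup {w : FreeGroup β} (hw : w ∈ normalClosure S) :
    π (FreeGroup.map Sum.inr w) ∈ inlSubgroup R S ν g := by
  have := normal_inlSubgroup (R := R) (S := S) (ν := ν) (g := g)
  exact normalClosure_le_normal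
    (N := (inlSubgroup R S ν g).comap ((PresentedGroup.mk _).comp (FreeGroup.map Sum.inr)))
    (fun W hW => mk_mem_inlSubgroup (Or.inr ⟨W, hW, rfl⟩)) hw

theorem toGroup_injective {N : Subgroup G} [N.Normal] (hνN : ν.range ≤ N)
    (hνR : ν.ker ≤ normalClosure R)
    (hgS : ((QuotientGroup.mk' N).comp (FreeGroup.lift g)).ker ≤ normalClosure S)
    (h : ∀ r ∈ relators R S ν g, FreeGroup.lift (generators ν g) r = 1) :
    Function.Injective (PresentedGroup.toGroup h) := by
  rw [injective_iff_map_eq_one]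
  intro q hq
  obtain ⟨w₁, w₂, rfl⟩ := exists_mk_map_inr_mul_mk_map_inl_eq q
  simp only [map_mul, PresentedGroup.toGroup_mk, lift_generators_map_inl,
    lift_generators_map_inr] at hq
  have hw₁ : w₁ ∈ normalClosure S := hgS <| by
    rw [MonoidHom.mem_ker, MonoidHom.comp_apply, eq_inv_of_mul_eq_one_left hq,
      QuotientGroup.mk'_apply, QuotientGroup.eq_one_iff]
    exact inv_mem (hνN ⟨w₂, rfl⟩)
  obtain ⟨w₃, hw₃⟩ :=
    mem_inlSubgroup_iff.1 (mk_map_inr_mem_inlSubgroup (R := R) (ν := ν) (g := g) hw₁)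
  have hν : ν (w₃ * w₂) = 1 := by
    have := congrArg (PresentedGroup.toGroup h) hw₃
    simp only [PresentedGroup.toGroup_mk, lift_generators_map_inl,
      lift_generators_map_inr] at this
    rw [map_mul, this, hq]
  rw [← hw₃, ← map_mul, ← map_mul]
  exact mk_map_inl_eq_one (hνR hν)

theorem toGroup_surjective {N : Subgroup G} [N.Normal] (hNν : N ≤ ν.range)
    (hg : Function.Surjective ((QuotientGroup.mk' N).comp (FreeGroup.lift g)))
    (h : ∀ r ∈ relators R S ν g, FreeGroup.lift (generators ν g) r = 1) :
    Function.Surjective (PresentedGroup.toGroup h) := by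
  intro x
  obtain ⟨w₁, hw₁⟩ := hg x
  obtain ⟨w₂, hw₂⟩ := hNν (QuotientGroup.eq.1 hw₁)
  exact ⟨π (FreeGroup.map Sum.inr w₁ * FreeGroup.map Sum.inl w₂), by simp [hw₂]⟩

end PresentedGroup

noncomputable def presentedGroupEquiv {N : Subgroup G} [N.Normal] (hνN : ν.range = N)
    (hνR : ν.ker = normalClosure R)
    (hgS : ((QuotientGroup.mk' N).comp (FreeGroup.lift g)).ker = normalClosure S)
    (hg : Function.Surjective ((QuotientGroup.mk' N).comp (FreeGroup.lift g))) :
    PresentedGroup (relators R S ν g) ≃* G :=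
  have h := lift_generators_relators_eq_one hνN (hνR ▸ subset_normalClosure)
    (hgS ▸ subset_normalClosure)
  MulEquiv.ofBijective (PresentedGroup.toGroup h)
    ⟨toGroup_injective hνN.le hνR.le hgS.le h, toGroup_surjective hνN.ge hg h⟩

theorem finite_conjugationWords [Finite α] [Finite β] : (conjugationWords α β).Finite :=
  (Set.finite_range _).union (Set.finite_range _)

theorem ncard_conjugationWords_le [Finite α] [Finite β] :
    (conjugationWords α β).ncard ≤ 2 * Nat.card α * Nat.card β :=
  calc (conjugationWords α β).ncard ≤ Nat.card (α × β) + Nat.card (α × β) :=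
        (Set.ncard_union_le _ _).trans
          (add_le_add (Finite.card_range_le _) (Finite.card_range_le _))
    _ = 2 * Nat.card α * Nat.card β := by rw [Nat.card_prod]; ring

theorem finite_relators [Finite α] [Finite β] (hR : R.Finite) (hS : S.Finite) :
    (relators R S ν g).Finite :=
  (hR.image _).union ((finite_conjugationWords.union (hS.image _)).image _)

theorem ncard_relators_le [Finite α] [Finite β] (hR : R.Finite) (hS : S.Finite) :
    (relators R S ν g).ncard ≤ R.ncard + 2 * Nat.card α * Nat.card β + S.ncard := by
  have hT : (conjugationWords α β ∪ FreeGroup.map Sum.inr '' S).ncard ≤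
      2 * Nat.card α * Nat.card β + S.ncard :=
    (Set.ncard_union_le _ _).trans (add_le_add ncard_conjugationWords_le (Set.ncard_image_le hS))
  calc (relators R S ν g).ncard
      ≤ R.ncard + (conjugationWords α β ∪ FreeGroup.map Sum.inr '' S).ncard :=
        (Set.ncard_union_le _ _).trans <| add_le_add (Set.ncard_image_le hR)
          (Set.ncard_image_le (finite_conjugationWords.union (hS.image _)))
    _ ≤ R.ncard + 2 * Nat.card α * Nat.card β + S.ncard := by omega

end HallPresentation

/-- P. Hall's lemma: if `N ⊴ G` has a presentation with `r` generators and `k`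
relations and `G/N` has a presentation with `s` generators and `l` relations,
then `G` has a presentation with `r + s` generators and at most `k + 2rs + l`
relations. -/
theorem hall_extension_presentation (G : Type*) [Group G]
    (N : Subgroup G) [N.Normal] (r k s l : ℕ)
    (hN : HasPresentation N r k) (hH : HasPresentation (G ⧸ N) s l) :
    HasPresentation G (r + s) (k + 2 * r * s + l) := by
  obtain ⟨R, hR, ⟨eN⟩⟩ := hN
  obtain ⟨S, hS, ⟨eH⟩⟩ := hH
  let ν : FreeGroup (Fin r) →* G :=
    N.subtype.comp ((eN : PresentedGroup (R : Set (FreeGroup (Fin r))) →* N).comp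
      (PresentedGroup.mk _))
  have hνN : ν.range = N := by
    rw [MonoidHom.range_comp,
      MonoidHom.range_eq_top.2 (eN.surjective.comp (PresentedGroup.mk_surjective _)),
      ← MonoidHom.range_eq_map, range_subtype]
  have hνR : ν.ker = normalClosure R := by
    rw [MonoidHom.ker_comp_of_injective _ _ N.subtype_injective,
      PresentedGroup.ker_mulEquiv_comp_mk]
  obtain ⟨g, hg⟩ := FreeGroup.exists_comp_lift_eq (QuotientGroup.mk'_surjective N)
    ((eH : PresentedGroup (S : Set (FreeGroup (Fin s))) →* G ⧸ N).comp (PresentedGroup.mk _))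
  refine HasPresentation.of_mulEquiv finSumFinEquiv
    (HallPresentation.finite_relators R.finite_toSet S.finite_toSet)
    ?_ (HallPresentation.presentedGroupEquiv hνN hνR (hg ▸ PresentedGroup.ker_mulEquiv_comp_mk eH)
      (hg ▸ eH.surjective.comp (PresentedGroup.mk_surjective _)))
  refine (HallPresentation.ncard_relators_le R.finite_toSet S.finite_toSet).trans ?_
  simp only [Set.ncard_coe_finset, Nat.card_fin]
  omega
end

section
/- Let H be a non-abelian finite p-group whose center Z(H) is elementary abelian and satisfies Z(H) ∩ Φ(H) ≠ 1, where Φ(H) is the Frattini subgroup. Then d(H) < d(Z(H)) + d(H/Z(H)). -/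
/-!
A maximal subgroup `M` of a finite `p`-group is normal of index `p`, so it contains all commutators
and `p`-th powers; hence `Φ(H) ≤ frattini H`. Pick `1 ≠ z ∈ Z(H) ∩ Φ(H)`. As `Z(H)` is an
`𝔽_p`-vector space, `z` extends to a basis `{z} ∪ T` with `|T| = d(Z(H)) - 1`. Lifting a minimal
generating set of `H/Z(H)` and adding `T` and `z` generates `H`; since `z` lies in the Frattini
subgroup it can be dropped, so `d(H) ≤ d(Z(H)) - 1 + d(H/Z(H))`.
-/

open Subgroup

theorem QuotientGroup.isSimpleOrder_of_isCoatom {G : Type*} [Group G] {N : Subgroup G} [N.Normal]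
    (hN : IsCoatom N) : IsSimpleOrder (Subgroup (G ⧸ N)) :=
  haveI := Set.isSimpleOrder_Ici_iff_isCoatom.mpr hN
  OrderIso.isSimpleOrder (β := Set.Ici N) (QuotientGroup.comapMk'OrderIso N)

section PGroup

variable {p : ℕ} [Fact p.Prime]

theorem IsPGroup.card_eq_of_isSimpleOrder {Q : Type*} [Group Q] [Finite Q] (hQ : IsPGroup p Q)
    [IsSimpleOrder (Subgroup Q)] : Nat.card Q = p := by
  have : Nontrivial Q := Subgroup.nontrivial_iff.mp inferInstance
  obtain ⟨n, hn, hcard⟩ := hQ.nontrivial_iff_card.mp this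
  obtain ⟨x, hx⟩ := exists_prime_orderOf_dvd_card' (G := Q) p (hcard ▸ dvd_pow_self p hn.ne')
  have hx1 : x ≠ 1 := by
    rintro rfl
    exact (Fact.out : p.Prime).ne_one (orderOf_one (G := Q) ▸ hx).symm
  rw [← hx, ← Nat.card_zpowers,
    (IsSimpleOrder.eq_bot_or_eq_top (zpowers x)).resolve_left (zpowers_eq_bot.not.mpr hx1),
    card_top]

theorem IsPGroup.commutator_sup_closure_pow_le_frattini {G : Type*} [Group G] [Finite G]
    (hG : IsPGroup p G) :
    commutator G ⊔ closure {x : G | ∃ g : G, x = g ^ p} ≤ frattini G := by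
  refine le_iInf₂ fun M hM => ?_
  have := NormalizerCondition.normal_of_coatom M
    (Group.normalizerCondition_of_isNilpotent (h := hG.isNilpotent)) hM
  have := QuotientGroup.isSimpleOrder_of_isCoatom hM
  have hcard := (hG.to_quotient M).card_eq_of_isSimpleOrder
  have := isCyclic_of_prime_card hcard
  refine sup_le (Normal.quotient_commutative_iff_commutator_le.mp inferInstance) ?_
  rw [closure_le]
  rintro _ ⟨g, rfl⟩
  rw [SetLike.mem_coe, ← QuotientGroup.eq_one_iff, QuotientGroup.mk_pow, ← hcard, pow_card_eq_one']

end PGroup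

theorem Subgroup.eq_top_of_le_of_map_mk'_eq_top {G : Type*} [Group G] {N K : Subgroup G}
    [N.Normal] (hNK : N ≤ K) (hK : K.map (QuotientGroup.mk' N) = ⊤) : K = ⊤ := by
  rw [← sup_of_le_right hNK, ← QuotientGroup.comap_map_mk', hK, comap_top]

theorem Group.rank_le_card_add_rank_quotient_of_le_closure_insert {G : Type*} [Group G]
    [Finite G] (N : Subgroup G) [N.Normal] {z : G} (hz : z ∈ frattini G) {T : Finset G}
    (hN : N ≤ closure (insert z (T : Set G))) :
    Group.rank G ≤ T.card + Group.rank (G ⧸ N) := by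
  classical
  obtain ⟨S, hS, hclosure⟩ := Group.rank_spec (G ⧸ N)
  set U := T ∪ S.image Quotient.out
  have hU : closure (U : Set G) = ⊤ := by
    apply frattini_nongenerating
    apply eq_top_of_le_of_map_mk'_eq_top (N := N)
    · refine hN.trans ((closure_le _).mpr (Set.insert_subset (mem_sup_right hz) fun t ht => ?_))
      exact mem_sup_left (subset_closure (Finset.mem_union_left _ ht))
    · rw [eq_top_iff, ← hclosure, closure_le]
      intro q hq
      refine ⟨q.out, mem_sup_left (subset_closure ?_), QuotientGroup.out_eq' q⟩
      exact Finset.mem_union_right _ (Finset.mem_image_of_mem _ hq)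
  calc Group.rank G ≤ U.card := Group.rank_le hU
    _ ≤ T.card + (S.image Quotient.out).card := Finset.card_union_le _ _
    _ ≤ T.card + Group.rank (G ⧸ N) := hS ▸ Nat.add_le_add_left Finset.card_image_le _

theorem Submodule.span_zmod_eq_addSubgroupClosure {n : ℕ} {V : Type*} [AddCommGroup V]
    [Module (ZMod n) V] (s : Set V) :
    (span (ZMod n) s).toAddSubgroup = AddSubgroup.closure s := by
  rw [← span_int_eq_addSubgroupClosure, ← restrictScalars_span ℤ (ZMod n) ZMod.intCast_surjective]
  rfl

theorem Subgroup.closure_eq_top_iff_addSubgroupClosure {G : Type*} [Group G] (s : Set G) :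
    closure s = ⊤ ↔ AddSubgroup.closure (Additive.toMul ⁻¹' s) = ⊤ := by
  rw [← toAddSubgroup_closure, map_eq_top_iff]

theorem Group.rank_eq_addGroupRank_additive {G : Type*} [Group G] [Group.FG G] :
    Group.rank G = AddGroup.rank (Additive G) := by
  classical
  apply le_antisymm
  · obtain ⟨S, hS, hclosure⟩ := AddGroup.rank_spec (Additive G)
    rw [← hS, ← Finset.card_image_of_injective S Additive.toMul.injective]
    apply Group.rank_le
    rw [closure_eq_top_iff_addSubgroupClosure]
    simpa using hclosure
  · obtain ⟨S, hS, hclosure⟩ := Group.rank_spec G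
    rw [← hS, ← Finset.card_image_of_injective S Additive.ofMul.injective]
    apply AddGroup.rank_le
    rw [closure_eq_top_iff_addSubgroupClosure] at hclosure
    rwa [Finset.coe_image, Additive.ofMul.image_eq_preimage_symm]

theorem Module.finrank_zmod_le_addGroupRank {p : ℕ} [Fact p.Prime] {V : Type*} [AddCommGroup V]
    [Module (ZMod p) V] [Finite V] : Module.finrank (ZMod p) V ≤ AddGroup.rank V := by
  obtain ⟨S, hS, hspan⟩ := AddGroup.rank_spec V
  rw [← Submodule.span_zmod_eq_addSubgroupClosure (n := p), Submodule.toAddSubgroup_eq_top]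
    at hspan
  rw [← hS, ← finrank_top, ← hspan]
  exact finrank_span_finset_le_card S

theorem exists_finset_card_add_one_eq_finrank_span_insert_eq_top {K V : Type*} [Field K]
    [AddCommGroup V] [Module K V] [FiniteDimensional K V] {z : V} (hz : z ≠ 0) :
    ∃ T : Finset V, T.card + 1 = Module.finrank K V ∧ Submodule.span K (insert z ↑T) = ⊤ := by
  classical
  have hz : LinearIndepOn K id {z} := LinearIndepOn.singleton hz
  set b := hz.extend (Set.subset_univ _)
  have hb : LinearIndepOn K id b := hz.linearIndepOn_extend _
  have hspan : Submodule.span K b = ⊤ := by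
    rw [hz.span_extend_eq_span, Submodule.span_univ]
  have : Finite b := hb.finite
  set B := b.toFinite.toFinset
  have hBb : (B : Set V) = b := b.toFinite.coe_toFinset
  have hzB : z ∈ B := by simpa [B] using hz.subset_extend (Set.subset_univ _) rfl
  refine ⟨B.erase z, ?_, ?_⟩
  · rw [Finset.card_erase_add_one hzB, ← finrank_top, ← hspan, ← hBb,
      finrank_span_finset_eq_card (hBb ▸ hb)]
  · rw [Finset.coe_erase, Set.insert_sdiff_singleton, Set.insert_eq_of_mem hzB, hBb, hspan]

theorem exists_finset_card_lt_rank_closure_insert_eq_top {p : ℕ} [Fact p.Prime] {A : Type*}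
    [CommGroup A] [Finite A] (hA : ∀ a : A, a ^ p = 1) {z : A} (hz : z ≠ 1) :
    ∃ T : Finset A, T.card < Group.rank A ∧ closure (insert z (T : Set A)) = ⊤ := by
  classical
  -- A `have` rather than a `let`: the instance must stay opaque for `FiniteDimensional` to be found.
  have : Module (ZMod p) (Additive A) := AddCommGroup.zmodModule fun a => hA a.toMul
  obtain ⟨T, hT, hspan⟩ :=
    exists_finset_card_add_one_eq_finrank_span_insert_eq_top (K := ZMod p) (V := Additive A)
      (z := Additive.ofMul z) hz
  refine ⟨T.image Additive.toMul, ?_, ?_⟩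
  · calc (T.image Additive.toMul).card ≤ T.card := Finset.card_image_le
      _ < Module.finrank (ZMod p) (Additive A) := by omega
      _ ≤ AddGroup.rank (Additive A) := Module.finrank_zmod_le_addGroupRank
      _ = Group.rank A := Group.rank_eq_addGroupRank_additive.symm
  · rw [closure_eq_top_iff_addSubgroupClosure, ← Submodule.span_zmod_eq_addSubgroupClosure (n := p),
      Submodule.toAddSubgroup_eq_top, ← hspan]
    congr 1
    ext x
    simp only [Finset.coe_image, Set.mem_preimage, Set.mem_insert_iff,
      Additive.toMul.injective.mem_set_image, Finset.mem_coe]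
    rfl

theorem rank_lt_of_center_meets_frattini_general
    (p : ℕ) [Fact p.Prime] (H : Type*) [Group H] [Finite H] (hH : IsPGroup p H)
    (helem : ∀ x ∈ Subgroup.center H, x ^ p = 1)
    (Φ : Subgroup H)
    (hΦ : Φ = commutator H ⊔ Subgroup.closure {x : H | ∃ h : H, x = h ^ p})
    (hmeet : Subgroup.center H ⊓ Φ ≠ ⊥) :
    Group.rank H < Group.rank (Subgroup.center H) + Group.rank (H ⧸ Subgroup.center H) := by
  classical
  obtain ⟨z, ⟨hzZ, hzΦ⟩, hz1⟩ := (bot_or_exists_ne_one _).resolve_left hmeet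
  have hzFrattini : z ∈ frattini H := hH.commutator_sup_closure_pow_le_frattini (hΦ ▸ hzΦ)
  open scoped IsMulCommutative in
  obtain ⟨T, hT, hclosure⟩ := exists_finset_card_lt_rank_closure_insert_eq_top
    (A := center H) (fun a => Subtype.ext (helem a a.2)) (z := ⟨z, hzZ⟩)
    (fun h => hz1 (congrArg Subtype.val h))
  have hZ : center H ≤ closure (insert z ↑(T.image Subtype.val)) := by
    intro x hx
    have := mem_map_of_mem (center H).subtype (hclosure ▸ mem_top (⟨x, hx⟩ : center H))
    rw [MonoidHom.map_closure, Set.image_insert_eq] at this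
    rwa [Finset.coe_image]
  calc Group.rank H ≤ (T.image Subtype.val).card + Group.rank (H ⧸ center H) :=
        Group.rank_le_card_add_rank_quotient_of_le_closure_insert _ hzFrattini hZ
    _ ≤ T.card + Group.rank (H ⧸ center H) := Nat.add_le_add_right Finset.card_image_le _
    _ < Group.rank (center H) + Group.rank (H ⧸ center H) := Nat.add_lt_add_right hT _

/-- A non-abelian finite `p`-group `H` with elementary abelian centre meeting
the Frattini subgroup nontrivially satisfies `d(H) < d(Z(H)) + d(H/Z(H))`. -/
theorem rank_lt_of_center_meets_frattini
    (p : ℕ) [Fact p.Prime] (H : Type*) [Group H] [Finite H] (hH : IsPGroup p H)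
    (hnonab : ∃ x y : H, x * y ≠ y * x)
    (helem : ∀ x ∈ Subgroup.center H, x ^ p = 1)
    (Φ : Subgroup H)
    (hΦ : Φ = commutator H ⊔ Subgroup.closure {x : H | ∃ h : H, x = h ^ p})
    (hmeet : Subgroup.center H ⊓ Φ ≠ ⊥) :
    Group.rank H < Group.rank (Subgroup.center H) + Group.rank (H ⧸ Subgroup.center H) :=
  rank_lt_of_center_meets_frattini_general p H hH helem Φ hΦ hmeet
end
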